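/- arXiv:1008.2372 — 4 statements merged into one kernel-verified Lean document; each statement's English description precedes it below -/
import Mathlib

section
/- Let F, g : ℝ → ℝ be continuous with g(x) > 0 for x > 0, and let t ↦ (x(t), y(t)) be a solution of the Lienard system ẋ = y − F(x), ẏ = −g(x) on [t₀, t₁] such that x(t) > 0 and F(x(t)) ≥ 0 for all t ∈ [t₀, t₁]. Then the integral of F along the arc satisfies ∫_{t₀}^{t₁} F(x(t)) y'(t) dt = −∫_{t₀}^{t₁} F(x(t)) g(x(t)) dt ≤ 0; equivalently, v(x(t₁), y(t₁)) ≤ v(x(t₀), y(t₀)). -/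
open Set Filter

/-! Along the flow, `d/dt [G(x) + y²/2] = g(x)(y - F(x)) - y g(x) = -F(x) g(x)`, which is `≤ 0`
while `x > 0` and `F(x) ≥ 0`; so the energy is antitone on `[t₀, t₁]`. -/

noncomputable def lienardEnergy (g : ℝ → ℝ) (x y : ℝ) : ℝ :=
  (∫ u in (0:ℝ)..x, g u) + y ^ 2 / 2

theorem HasDerivWithinAt.lienardEnergy {F g x y : ℝ → ℝ} {s : Set ℝ} {t : ℝ}
    (hg : Continuous g) (hx : HasDerivWithinAt x (y t - F (x t)) s t)
    (hy : HasDerivWithinAt y (-g (x t)) s t) :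
    HasDerivWithinAt (fun τ ↦ lienardEnergy g (x τ) (y τ)) (-(F (x t) * g (x t))) s t := by
  have hG := ((hg.integral_hasStrictDerivAt 0 (x t)).hasDerivAt).comp_hasDerivWithinAt t hx
  exact (hG.add ((hy.pow 2).div_const 2)).congr_deriv (by ring)

theorem antitoneOn_Icc_of_hasDerivWithinAt_nonpos {f f' : ℝ → ℝ} {a b : ℝ}
    (hf : ∀ t ∈ Icc a b, HasDerivWithinAt f (f' t) (Icc a b) t)
    (hf' : ∀ t ∈ Icc a b, f' t ≤ 0) : AntitoneOn f (Icc a b) :=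
  antitoneOn_of_hasDerivWithinAt_nonpos (convex_Icc a b)
    (fun t ht ↦ (hf t ht).continuousWithinAt)
    (fun t ht ↦ (hf t (interior_subset ht)).mono interior_subset)
    (fun t ht ↦ hf' t (interior_subset ht))

theorem lienard_energy_decreases_general (F g : ℝ → ℝ)
    (hg : Continuous g)
    (hgpos : ∀ x : ℝ, 0 < x → 0 < g x)
    (t₀ t₁ : ℝ) (ht : t₀ ≤ t₁) (x y : ℝ → ℝ)
    (hx : ∀ t ∈ Set.Icc t₀ t₁, HasDerivWithinAt x (y t - F (x t)) (Set.Icc t₀ t₁) t)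
    (hy : ∀ t ∈ Set.Icc t₀ t₁, HasDerivWithinAt y (-(g (x t))) (Set.Icc t₀ t₁) t)
    (hxpos : ∀ t ∈ Set.Icc t₀ t₁, 0 < x t)
    (hFnonneg : ∀ t ∈ Set.Icc t₀ t₁, 0 ≤ F (x t)) :
    (∫ t in t₀..t₁, F (x t) * (-(g (x t)))) = -∫ t in t₀..t₁, F (x t) * g (x t) ∧
    (-∫ t in t₀..t₁, F (x t) * g (x t)) ≤ 0 ∧
    (∫ u in (0:ℝ)..x t₁, g u) + (y t₁) ^ 2 / 2
      ≤ (∫ u in (0:ℝ)..x t₀, g u) + (y t₀) ^ 2 / 2 := by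
  have hdissip : ∀ t ∈ Icc t₀ t₁, 0 ≤ F (x t) * g (x t) := fun t ht ↦
    mul_nonneg (hFnonneg t ht) (hgpos _ (hxpos t ht)).le
  have hanti : AntitoneOn (fun t ↦ lienardEnergy g (x t) (y t)) (Icc t₀ t₁) :=
    antitoneOn_Icc_of_hasDerivWithinAt_nonpos (fun t ht ↦ (hx t ht).lienardEnergy hg (hy t ht))
      (fun t ht ↦ neg_nonpos.2 (hdissip t ht))
  refine ⟨by simp only [mul_neg, intervalIntegral.integral_neg], ?_, ?_⟩
  · exact neg_nonpos.2 (intervalIntegral.integral_nonneg ht hdissip)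
  · exact hanti (left_mem_Icc.2 ht) (right_mem_Icc.2 ht) ht

/-- Along a solution arc with `x > 0` and `F(x) ≥ 0`, the integral `∫ F dy` is
nonpositive; equivalently the energy `v = G(x) + y²/2` does not increase. -/
theorem lienard_energy_decreases (F g : ℝ → ℝ)
    (hF : Continuous F) (hg : Continuous g)
    (hgpos : ∀ x : ℝ, 0 < x → 0 < g x)
    (t₀ t₁ : ℝ) (ht : t₀ ≤ t₁) (x y : ℝ → ℝ)
    (hx : ∀ t ∈ Set.Icc t₀ t₁, HasDerivWithinAt x (y t - F (x t)) (Set.Icc t₀ t₁) t)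
    (hy : ∀ t ∈ Set.Icc t₀ t₁, HasDerivWithinAt y (-(g (x t))) (Set.Icc t₀ t₁) t)
    (hxpos : ∀ t ∈ Set.Icc t₀ t₁, 0 < x t)
    (hFnonneg : ∀ t ∈ Set.Icc t₀ t₁, 0 ≤ F (x t)) :
    (∫ t in t₀..t₁, F (x t) * (-(g (x t)))) = -∫ t in t₀..t₁, F (x t) * g (x t) ∧
    (-∫ t in t₀..t₁, F (x t) * g (x t)) ≤ 0 ∧
    (∫ u in (0:ℝ)..x t₁, g u) + (y t₁) ^ 2 / 2
      ≤ (∫ u in (0:ℝ)..x t₀, g u) + (y t₀) ^ 2 / 2 :=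
  lienard_energy_decreases_general F g hg hgpos t₀ t₁ ht x y hx hy hxpos hFnonneg
end

section
/- Let f, g : ℝ → ℝ be continuous with g locally Lipschitz, let F(x) = ∫₀ˣ f(u) du, and suppose F and g are odd with g(x) > 0 for x > 0. Then the image of every nonconstant periodic solution of the Lienard system ẋ = y − F(x), ẏ = −g(x) is symmetric about the origin: a point (p, q) lies on the orbit if and only if (−p, −q) lies on the orbit. -/
/-!
Reflecting a solution through the origin, `t ↦ (-x (t + Δ), -y (t + Δ))`, gives again a solution
because `F` and `g` are odd, so by uniqueness for the locally Lipschitz field it suffices to find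
times `t`, `s` with `(x t, y t) = -(x s, y s)`: the reflected solution then coincides with the
original one for a suitable shift `Δ`, and the orbit is symmetric.

Take `t₀` maximizing `|y|`; replacing the solution by its reflection we may assume `y t₀ > 0`, and
then `ẏ t₀ = -g (x t₀) = 0` forces `x t₀ = 0`. Since `ẏ = -g x`, `y` is strictly monotone between
consecutive zeros of `x`, so the orbit consists of arcs that are graphs over the `y`-axis: a right
arc (`x ≥ 0`) starts at `t₀` and a left arc (`x ≤ 0`) ends at `t₀`. Because `|y| ≤ y t₀`, each arc
reaches height at most `y t₀` and depth at least `-y t₀`, and the intermediate value theorem shows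
that the right arc meets the reflection of the left arc.
-/

open Set Filter

/-- A solution of the Lienard system `ẋ = y - F x`, `ẏ = -g x`. -/
def IsSolution (F g : ℝ → ℝ) (x y : ℝ → ℝ) : Prop :=
  ∀ t : ℝ, HasDerivAt x (y t - F (x t)) t ∧ HasDerivAt y (-(g (x t))) t

open Topology

theorem Continuous.locallyLipschitz_intervalIntegral {E : Type*} [NormedAddCommGroup E]
    [NormedSpace ℝ E] [CompleteSpace E] {f : ℝ → E} (hf : Continuous f) (a : ℝ) :
    LocallyLipschitz fun x => ∫ u in a..x, f u :=
  fun x => (hf.integral_hasStrictDerivAt a x).hasStrictFDerivAt.exists_lipschitzOnWith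

theorem ODE_solution_unique_of_locallyLipschitz {E : Type*} [NormedAddCommGroup E]
    [NormedSpace ℝ E] {v : E → E} (hv : LocallyLipschitz v) {f g : ℝ → E}
    (hf : ∀ t, HasDerivAt f (v (f t)) t) (hg : ∀ t, HasDerivAt g (v (g t)) t)
    {t₀ : ℝ} (heq : f t₀ = g t₀) : f = g := by
  have hfc : Continuous f := continuous_iff_continuousAt.2 fun t => (hf t).continuousAt
  have hgc : Continuous g := continuous_iff_continuousAt.2 fun t => (hg t).continuousAt
  have hclopen : IsClopen {t | f t = g t} := by
    refine ⟨isClosed_eq hfc hgc, isOpen_iff_mem_nhds.2 fun s (hs : f s = g s) => ?_⟩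
    obtain ⟨K, U, hU, hK⟩ := hv (f s)
    exact ODE_solution_unique_of_eventually (v := fun _ => v) (s := fun _ => U)
      (.of_forall fun _ => hK)
      ((hfc.continuousAt.eventually_mem hU).mono fun t ht => ⟨hf t, ht⟩)
      ((hgc.continuousAt.eventually_mem (hs ▸ hU)).mono fun t ht => ⟨hg t, ht⟩) hs
  exact funext (eq_univ_iff_forall.1 (hclopen.eq_univ ⟨t₀, heq⟩))

theorem HasDerivAt.eventually_nhdsGT_pos {x : ℝ → ℝ} {d a : ℝ} (hx : HasDerivAt x d a)
    (hd : 0 < d) (ha : x a = 0) : ∀ᶠ t in 𝓝[>] a, 0 < x t := by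
  filter_upwards [nhdsGT_le_nhdsNE a ((hasDerivAt_iff_tendsto_slope.1 hx).eventually
    (eventually_gt_nhds hd)), self_mem_nhdsWithin] with t ht hat using pos_of_slope_pos hat ht ha

theorem HasDerivAt.eventually_nhdsLT_neg {x : ℝ → ℝ} {d a : ℝ} (hx : HasDerivAt x d a)
    (hd : 0 < d) (ha : x a = 0) : ∀ᶠ t in 𝓝[<] a, x t < 0 := by
  filter_upwards [nhdsLT_le_nhdsNE a ((hasDerivAt_iff_tendsto_slope.1 hx).eventually
    (eventually_gt_nhds hd)), self_mem_nhdsWithin] with t ht hat using neg_of_slope_pos hat ht ha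

theorem exists_first_zero {x : ℝ → ℝ} (hx : Continuous x) {a c : ℝ}
    (hpos : ∀ᶠ t in 𝓝[>] a, 0 < x t) (hac : a < c) (hc : x c ≤ 0) :
    ∃ b ∈ Ioc a c, x b = 0 ∧ ∀ t ∈ Ioo a b, 0 < x t := by
  obtain ⟨u, hau, hpos⟩ := mem_nhdsGT_iff_exists_Ioo_subset.1 hpos
  set S := {t | t ∈ Ioc a c ∧ x t ≤ 0}
  have hS : S.Nonempty := ⟨c, ⟨hac, le_rfl⟩, hc⟩
  have hSbdd : BddBelow S := ⟨a, fun t ht => ht.1.1.le⟩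
  have hab : a < sInf S :=
    hau.trans_le <| le_csInf hS fun t ht => not_lt.1 fun htu => (hpos ⟨ht.1.1, htu⟩).not_ge ht.2
  obtain ⟨⟨-, hbc⟩, hxb⟩ : sInf S ∈ Icc a c ∧ x (sInf S) ≤ 0 :=
    closure_minimal (t := Icc a c ∩ {t | x t ≤ 0})
      (fun t ht => ⟨Ioc_subset_Icc_self ht.1, ht.2⟩)
      (isClosed_Icc.inter (isClosed_le hx continuous_const)) (csInf_mem_closure hS hSbdd)
  have hbetween : ∀ t ∈ Ioo a (sInf S), 0 < x t := fun t ht =>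
    not_le.1 fun h => (csInf_le hSbdd ⟨⟨ht.1, ht.2.le.trans hbc⟩, h⟩).not_gt ht.2
  refine ⟨sInf S, ⟨hab, hbc⟩, le_antisymm hxb ?_, hbetween⟩
  exact ge_of_tendsto (hx.continuousAt.tendsto.mono_left nhdsWithin_le_nhds)
    (mem_of_superset (Ioo_mem_nhdsLT hab) fun t ht => (hbetween t ht).le)

theorem exists_last_zero {x : ℝ → ℝ} (hx : Continuous x) {b c : ℝ}
    (hneg : ∀ᶠ t in 𝓝[<] b, x t < 0) (hcb : c < b) (hc : 0 ≤ x c) :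
    ∃ a ∈ Ico c b, x a = 0 ∧ ∀ t ∈ Ioo a b, x t < 0 := by
  have hpos : ∀ᶠ t in 𝓝[>] (-b), 0 < -x (-t) :=
    tendsto_neg_nhdsGT_neg.eventually (hneg.mono fun t ht => neg_pos.2 ht)
  obtain ⟨a, ha, hxa, hpos⟩ :=
    exists_first_zero (hx.comp continuous_neg).neg hpos (neg_lt_neg hcb) (by simpa using hc)
  refine ⟨-a, ⟨by linarith [ha.2], by linarith [ha.1]⟩, by simpa using hxa, fun t ht => ?_⟩
  simpa using hpos (-t) ⟨by linarith [ht.2], by linarith [ht.1]⟩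

theorem StrictMonoOn.exists_continuous_rightInvOn_Icc {α β : Type*}
    [ConditionallyCompleteLinearOrder α] [TopologicalSpace α] [OrderTopology α] [DenselyOrdered α]
    [ConditionallyCompleteLinearOrder β] [TopologicalSpace β] [OrderTopology β]
    {f : α → β} {a b : α} (hab : a ≤ b)
    (hf : ContinuousOn f (Icc a b)) (hm : StrictMonoOn f (Icc a b)) :
    ∃ σ : β → α, Continuous σ ∧ (∀ r, σ r ∈ Icc a b) ∧ RightInvOn σ f (Icc (f a) (f b)) := by
  have hmaps : ∀ t ∈ Icc a b, f t ∈ Icc (f a) (f b) := fun t ht =>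
    ⟨hm.monotoneOn (left_mem_Icc.2 hab) ht ht.1, hm.monotoneOn ht (right_mem_Icc.2 hab) ht.2⟩
  have hfab : f a ≤ f b := (hmaps a (left_mem_Icc.2 hab)).2
  let e : Icc a b ≃o Icc (f a) (f b) := StrictMono.orderIsoOfSurjective
    (fun t => ⟨f t, hmaps t t.2⟩) (fun s t hst => hm s.2 t.2 hst)
    (fun r => let ⟨t, ht, hr⟩ := intermediate_value_Icc hab hf r.2; ⟨⟨t, ht⟩, Subtype.ext hr⟩)
  refine ⟨fun r => e.symm (projIcc (f a) (f b) hfab r),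
    continuous_subtype_val.comp (e.symm.continuous.comp continuous_projIcc),
    fun r => (e.symm _).2, fun r hr => ?_⟩
  change f (e.symm _) = r
  rw [projIcc_of_mem hfab hr]
  exact congrArg Subtype.val (e.apply_symm_apply ⟨r, hr⟩)

theorem exists_antipodal_of_arcs {x y : ℝ → ℝ} (hx : Continuous x) (hy : Continuous y)
    {a b p q : ℝ} (hab : a ≤ b) (hpq : p ≤ q) (hxb : x b = 0) (hxp : x p = 0)
    (hxR : ∀ t ∈ Icc a b, 0 ≤ x t) (hxL : ∀ t ∈ Icc p q, x t ≤ 0)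
    (hyR : StrictAntiOn y (Icc a b)) (hyL : StrictMonoOn y (Icc p q))
    (hp : -y p ∈ Icc (y b) (y a)) (hb : -y b ∈ Icc (y p) (y q)) :
    ∃ t s, x t = -x s ∧ y t = -y s := by
  obtain ⟨σ, hσc, hσI, hσy⟩ := hyL.exists_continuous_rightInvOn_Icc hpq hy.continuousOn
  have hσp : σ (y p) = p := hyL.injOn (hσI _) (left_mem_Icc.2 hpq)
    (hσy ⟨le_rfl, hyL.monotoneOn (left_mem_Icc.2 hpq) (right_mem_Icc.2 hpq) hpq⟩)
  -- `σ` parametrizes the left arc by height, so a zero of `x t + x (σ (-y t))` is a point where the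
  -- right arc meets the reflected left arc; it changes sign between the heights `-y p` and `y b`.
  obtain ⟨c, hc, hyc⟩ := intermediate_value_Icc' hab hy.continuousOn hp
  have hmem : ∀ t ∈ Icc c b, -y t ∈ Icc (y p) (y q) := fun t ht => by
    have hta : t ∈ Icc a b := ⟨hc.1.trans ht.1, ht.2⟩
    constructor
    · linarith [hyR.antitoneOn hc hta ht.1]
    · linarith [hyR.antitoneOn hta (right_mem_Icc.2 hab) ht.2, hb.2]
  obtain ⟨t, ht, hD⟩ : ∃ t ∈ Icc c b, x t + x (σ (-y t)) = 0 := by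
    refine intermediate_value_Icc' hc.2 (by fun_prop) ⟨?_, ?_⟩
    · simpa [hxb] using hxL _ (hσI _)
    · simpa [hyc, hσp, hxp] using hxR c hc
  exact ⟨t, σ (-y t), by linarith, by rw [hσy (hmem t ht), neg_neg]⟩

namespace IsSolution

variable {F g x y : ℝ → ℝ} {T : ℝ}

theorem continuous_x (h : IsSolution F g x y) : Continuous x :=
  continuous_iff_continuousAt.2 fun t => (h t).1.continuousAt

theorem continuous_y (h : IsSolution F g x y) : Continuous y :=
  continuous_iff_continuousAt.2 fun t => (h t).2.continuousAt

theorem zero (hF0 : F 0 = 0) (hg0 : g 0 = 0) : IsSolution F g 0 0 := fun t => by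
  simp [hF0, hg0]

theorem comp_add_const (h : IsSolution F g x y) (Δ : ℝ) :
    IsSolution F g (fun t => x (t + Δ)) (fun t => y (t + Δ)) :=
  fun t => ⟨(h (t + Δ)).1.comp_add_const t Δ, (h (t + Δ)).2.comp_add_const t Δ⟩

theorem neg (hFodd : F.Odd) (hgodd : g.Odd) (h : IsSolution F g x y) :
    IsSolution F g (fun t => -x t) (fun t => -y t) := fun t => by
  refine ⟨(h t).1.neg.congr_deriv ?_, (h t).2.neg.congr_deriv ?_⟩
  · rw [hFodd]; ring
  · rw [hgodd]

theorem unique (hF : LocallyLipschitz F) (hg : LocallyLipschitz g) {x₁ y₁ x₂ y₂ : ℝ → ℝ}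
    (h₁ : IsSolution F g x₁ y₁) (h₂ : IsSolution F g x₂ y₂) {t₀ : ℝ}
    (hx : x₁ t₀ = x₂ t₀) (hy : y₁ t₀ = y₂ t₀) : x₁ = x₂ ∧ y₁ = y₂ := by
  have hfst : LocallyLipschitz (Prod.fst : ℝ × ℝ → ℝ) := LipschitzWith.prod_fst.locallyLipschitz
  have hv : LocallyLipschitz fun p : ℝ × ℝ => (p.2 - F p.1, -g p.1) :=
    (LipschitzWith.prod_snd.locallyLipschitz.sub (hF.comp hfst)).prodMk (hg.comp hfst).neg
  have := ODE_solution_unique_of_locallyLipschitz hv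
    (f := fun t => (x₁ t, y₁ t)) (g := fun t => (x₂ t, y₂ t))
    (fun t => (h₁ t).1.prodMk (h₁ t).2) (fun t => (h₂ t).1.prodMk (h₂ t).2) (Prod.ext hx hy)
  exact ⟨funext fun t => congrArg Prod.fst (congrFun this t),
    funext fun t => congrArg Prod.snd (congrFun this t)⟩

theorem y_ne_zero_of_x_eq_zero (hF : LocallyLipschitz F) (hg : LocallyLipschitz g)
    (hF0 : F 0 = 0) (hg0 : g 0 = 0) (h : IsSolution F g x y)
    (hnc : ∃ t₁ t₂, x t₁ ≠ x t₂ ∨ y t₁ ≠ y t₂) {t : ℝ} (hx : x t = 0) : y t ≠ 0 := by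
  intro hy
  obtain ⟨rfl, rfl⟩ := h.unique hF hg (zero hF0 hg0) hx hy
  obtain ⟨t₁, t₂, hne⟩ := hnc
  simp at hne

theorem hasDerivAt_x_of_x_eq_zero (hF0 : F 0 = 0) (h : IsSolution F g x y) {t : ℝ}
    (hx : x t = 0) : HasDerivAt x (y t) t := by
  simpa [hx, hF0] using (h t).1

theorem exists_right_arc_from (h : IsSolution F g x y) (hF0 : F 0 = 0)
    (hgpos : ∀ u, 0 < u → 0 < g u) (hT : 0 < T) (hxp : Function.Periodic x T) {a : ℝ}
    (ha : x a = 0) (hya : 0 < y a) :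
    ∃ b, a < b ∧ x b = 0 ∧ y b ≤ 0 ∧ (∀ t ∈ Icc a b, 0 ≤ x t) ∧ StrictAntiOn y (Icc a b) := by
  obtain ⟨b, hab, hxb, hpos⟩ := exists_first_zero h.continuous_x
    ((h.hasDerivAt_x_of_x_eq_zero hF0 ha).eventually_nhdsGT_pos hya ha)
    (lt_add_of_pos_right a hT) (by rw [hxp, ha])
  refine ⟨b, hab.1, hxb, ?_, ?_, ?_⟩
  · by_contra! hyb
    obtain ⟨t, hneg, ht⟩ := (((h.hasDerivAt_x_of_x_eq_zero hF0 hxb).eventually_nhdsLT_neg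
      hyb hxb).and (Ioo_mem_nhdsLT hab.1)).exists
    exact (hpos t ht).not_gt hneg
  · intro t ht
    rcases eq_endpoints_or_mem_Ioo_of_mem_Icc ht with rfl | rfl | ht
    exacts [ha.ge, hxb.ge, (hpos t ht).le]
  · refine strictAntiOn_of_deriv_neg (convex_Icc a b) h.continuous_y.continuousOn fun t ht => ?_
    rw [interior_Icc] at ht
    rw [(h t).2.deriv]
    exact neg_neg_of_pos (hgpos _ (hpos t ht))

theorem exists_left_arc_to (h : IsSolution F g x y) (hF0 : F 0 = 0)
    (hgneg : ∀ u, u < 0 → g u < 0) (hT : 0 < T) (hxp : Function.Periodic x T) {b : ℝ}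
    (hb : x b = 0) (hyb : 0 < y b) :
    ∃ a, a < b ∧ x a = 0 ∧ y a ≤ 0 ∧ (∀ t ∈ Icc a b, x t ≤ 0) ∧ StrictMonoOn y (Icc a b) := by
  obtain ⟨a, hab, hxa, hneg⟩ := exists_last_zero h.continuous_x
    ((h.hasDerivAt_x_of_x_eq_zero hF0 hb).eventually_nhdsLT_neg hyb hb)
    (sub_lt_self b hT) (by rw [hxp.sub_eq, hb])
  refine ⟨a, hab.2, hxa, ?_, ?_, ?_⟩
  · by_contra! hya
    obtain ⟨t, hpos, ht⟩ := (((h.hasDerivAt_x_of_x_eq_zero hF0 hxa).eventually_nhdsGT_pos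
      hya hxa).and (Ioo_mem_nhdsGT hab.2)).exists
    exact (hneg t ht).not_gt hpos
  · intro t ht
    rcases eq_endpoints_or_mem_Ioo_of_mem_Icc ht with rfl | rfl | ht
    exacts [hxa.le, hb.le, (hneg t ht).le]
  · refine strictMonoOn_of_deriv_pos (convex_Icc a b) h.continuous_y.continuousOn fun t ht => ?_
    rw [interior_Icc] at ht
    rw [(h t).2.deriv]
    exact neg_pos.2 (hgneg _ (hneg t ht))

theorem exists_antipodal_of_abs_le (h : IsSolution F g x y) (hFodd : F.Odd) (hgodd : g.Odd)
    (hgpos : ∀ u, 0 < u → 0 < g u) (hT : 0 < T) (hxp : Function.Periodic x T)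
    (horigin : ∀ t, x t = 0 → y t ≠ 0) {t₀ : ℝ} (hmax : ∀ t, |y t| ≤ y t₀) :
    ∃ t s, x t = -x s ∧ y t = -y s := by
  have hgneg : ∀ u, u < 0 → g u < 0 := fun u hu => by
    linarith [hgodd u, hgpos (-u) (neg_pos.2 hu)]
  have hx₀ : x t₀ = 0 := by
    have hgx : -g (x t₀) = 0 := IsLocalMax.hasDerivAt_eq_zero
      (.of_forall fun t => (le_abs_self _).trans (hmax t)) (h t₀).2
    rcases lt_trichotomy (x t₀) 0 with hlt | hzero | hgt
    · linarith [hgneg _ hlt]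
    · exact hzero
    · linarith [hgpos _ hgt]
  have hy₀ : 0 < y t₀ := ((abs_nonneg _).trans (hmax t₀)).lt_of_ne (horigin t₀ hx₀).symm
  obtain ⟨t₁, h01, hx₁, hy₁, hxR, hyR⟩ :=
    h.exists_right_arc_from hFodd.map_zero hgpos hT hxp hx₀ hy₀
  obtain ⟨s, hs0, hxs, hys, hxL, hyL⟩ :=
    h.exists_left_arc_to hFodd.map_zero hgneg hT hxp hx₀ hy₀
  have h₁ := abs_le.1 (hmax t₁)
  have hs := abs_le.1 (hmax s)
  exact exists_antipodal_of_arcs h.continuous_x h.continuous_y h01.le hs0.le hx₁ hxs hxR hxL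
    hyR hyL ⟨by linarith, by linarith⟩ ⟨by linarith, by linarith⟩

theorem exists_antipodal (h : IsSolution F g x y) (hFodd : F.Odd) (hgodd : g.Odd)
    (hgpos : ∀ u, 0 < u → 0 < g u) (hT : 0 < T) (hxp : Function.Periodic x T)
    (hyp : Function.Periodic y T) (horigin : ∀ t, x t = 0 → y t ≠ 0) :
    ∃ t s, x t = -x s ∧ y t = -y s := by
  obtain ⟨_, ⟨t₀, rfl⟩, hmax⟩ := ((hyp.comp (|·|)).compact_of_continuous hT.ne'
    h.continuous_y.abs).exists_isGreatest (range_nonempty _)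
  rcases le_total 0 (y t₀) with hy₀ | hy₀
  · exact h.exists_antipodal_of_abs_le hFodd hgodd hgpos hT hxp horigin
      fun t => by simpa [abs_of_nonneg hy₀] using hmax ⟨t, rfl⟩
  · obtain ⟨t, s, hx, hy⟩ := (h.neg hFodd hgodd).exists_antipodal_of_abs_le hFodd hgodd hgpos
      hT (fun t => by simp [hxp t]) (fun t hx hy => horigin t (neg_eq_zero.1 hx) (neg_eq_zero.1 hy))
      (t₀ := t₀) fun t => by simpa [abs_of_nonpos hy₀] using hmax ⟨t, rfl⟩
    exact ⟨t, s, by linarith, by linarith⟩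

theorem apply_add_eq_neg (hF : LocallyLipschitz F) (hg : LocallyLipschitz g) (hFodd : F.Odd)
    (hgodd : g.Odd) (h : IsSolution F g x y) {t s : ℝ} (hx : x t = -x s) (hy : y t = -y s)
    (τ : ℝ) : x (τ + (s - t)) = -x τ ∧ y (τ + (s - t)) = -y τ := by
  obtain ⟨hx', hy'⟩ := h.unique hF hg ((h.comp_add_const (s - t)).neg hFodd hgodd) (t₀ := t)
    (by simpa using hx) (by simpa using hy)
  constructor
  · linarith [congrFun hx' τ]
  · linarith [congrFun hy' τ]

end IsSolution

theorem lienard_orbit_symmetric_general (f g F : ℝ → ℝ)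
    (hf : Continuous f) (hglip : LocallyLipschitz g)
    (hF : ∀ x, F x = ∫ u in (0:ℝ)..x, f u)
    (hFodd : ∀ x, F (-x) = -F x) (hgodd : ∀ x, g (-x) = -g x)
    (hgpos : ∀ x, 0 < x → 0 < g x)
    (x y : ℝ → ℝ) (hsol : IsSolution F g x y)
    (T : ℝ) (hT : 0 < T)
    (hxp : Function.Periodic x T) (hyp : Function.Periodic y T)
    (hnc : ∃ t₁ t₂ : ℝ, x t₁ ≠ x t₂ ∨ y t₁ ≠ y t₂)
    (p q : ℝ) :
    (p, q) ∈ Set.range (fun t => (x t, y t)) ↔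
      (-p, -q) ∈ Set.range (fun t => (x t, y t)) := by
  have hFlip : LocallyLipschitz F := by
    simpa only [← funext hF] using hf.locallyLipschitz_intervalIntegral 0
  have horigin t := hsol.y_ne_zero_of_x_eq_zero hFlip hglip (Function.Odd.map_zero hFodd)
    (Function.Odd.map_zero hgodd) hnc (t := t)
  obtain ⟨t, s, hxts, hyts⟩ := hsol.exists_antipodal hFodd hgodd hgpos hT hxp hyp horigin
  have hshift := hsol.apply_add_eq_neg hFlip hglip hFodd hgodd hxts hyts
  constructor <;> rintro ⟨τ, hτ⟩ <;> obtain ⟨hp, hq⟩ := Prod.mk.inj hτ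
  · exact ⟨τ + (s - t), by simp [hshift τ, ← hp, ← hq]⟩
  · exact ⟨τ + (s - t), by simp [hshift τ, hp, hq]⟩

/-- For an odd Lienard system, every closed orbit is symmetric about the origin. -/
theorem lienard_orbit_symmetric (f g F : ℝ → ℝ)
    (hf : Continuous f) (hg : Continuous g) (hglip : LocallyLipschitz g)
    (hF : ∀ x, F x = ∫ u in (0:ℝ)..x, f u)
    (hFodd : ∀ x, F (-x) = -F x) (hgodd : ∀ x, g (-x) = -g x)
    (hgpos : ∀ x, 0 < x → 0 < g x)
    (x y : ℝ → ℝ) (hsol : IsSolution F g x y)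
    (T : ℝ) (hT : 0 < T)
    (hxp : Function.Periodic x T) (hyp : Function.Periodic y T)
    (hnc : ∃ t₁ t₂ : ℝ, x t₁ ≠ x t₂ ∨ y t₁ ≠ y t₂)
    (p q : ℝ) :
    (p, q) ∈ Set.range (fun t => (x t, y t)) ↔
      (-p, -q) ∈ Set.range (fun t => (x t, y t)) :=
  lienard_orbit_symmetric_general f g F hf hglip hF hFodd hgodd hgpos x y hsol T hT hxp hyp hnc p q
end

section
/- Let g : ℝ → ℝ be continuous with g(x) > 0 for x > 0, and let F : ℝ → ℝ be continuous with F(x) < 0 for 0 < x < a₁ and F(0) = F(a₁) = 0, where a₁ > 0. Let u, w : [0, a₁] → ℝ be differentiable with w(x) > u(x) > 0 for all x ∈ [0, a₁], satisfying the phase-path equations u'(x) = −g(x)/(u(x) − F(x)) and w'(x) = −g(x)/(w(x) − F(x)) (these are graphs of trajectory arcs of the Lienard system lying above the curve y = F(x) in the region y > 0). Then ∫₀^{a₁} F(x) u'(x) dx > ∫₀^{a₁} F(x) w'(x) dx > 0: the contribution to ∫ F dy along such an arc is positive and strictly decreases as the arc moves outward. -/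
/-!
Along a phase path `y(x)` we have `F dy = F y' dx = g |F| / (y - F) dx` where `F < 0 < g`.
Since the arcs lie in `y > 0 ≥ F`, this integrand is positive and strictly decreasing in `y`
on `0 < x < a₁`, and integrating the pointwise inequalities over `[0, a₁]` keeps them strict.
-/

open Set MeasureTheory intervalIntegral

theorem mul_neg_div_sub_pos {f c y : ℝ} (hf : f < 0) (hc : 0 < c) (hy : f < y) :
    0 < f * (-c / (y - f)) :=
  mul_pos_of_neg_of_neg hf (div_neg_of_neg_of_pos (neg_neg_of_pos hc) (sub_pos.2 hy))

theorem mul_neg_div_sub_lt_of_lt {f c y₁ y₂ : ℝ} (hf : f < 0) (hc : 0 < c) (hy₁ : f < y₁)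
    (hy : y₁ < y₂) : f * (-c / (y₂ - f)) < f * (-c / (y₁ - f)) := by
  refine mul_lt_mul_of_neg_left ?_ hf
  rw [neg_div, neg_div, neg_lt_neg_iff]
  exact div_lt_div_of_pos_left hc (sub_pos.2 hy₁) (sub_lt_sub_right hy f)

theorem ContinuousOn.mul_neg_div_sub {F g y : ℝ → ℝ} {s : Set ℝ} (hF : ContinuousOn F s)
    (hg : ContinuousOn g s) (hy : ContinuousOn y s) (hFy : ∀ x ∈ s, F x < y x) :
    ContinuousOn (fun x => F x * (-(g x) / (y x - F x))) s :=
  hF.mul (hg.neg.div (hy.sub hF) fun x hx => (sub_pos.2 (hFy x hx)).ne')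

theorem nonpos_on_Icc_of_neg_on_Ioo {F : ℝ → ℝ} {a b : ℝ} (hF : ∀ x, a < x → x < b → F x < 0)
    (ha : F a = 0) (hb : F b = 0) : ∀ x ∈ Icc a b, F x ≤ 0 := by
  rintro x ⟨hax, hxb⟩
  rcases hax.eq_or_lt with rfl | hax
  · exact ha.le
  rcases hxb.eq_or_lt with rfl | hxb
  · exact hb.le
  exact (hF x hax hxb).le

theorem intervalIntegral.integral_lt_integral_of_lt_on_Ioo {f h : ℝ → ℝ} {a b : ℝ} (hab : a < b)
    (hf : IntervalIntegrable f volume a b)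
    (hh : IntervalIntegrable h volume a b) (hlt : ∀ x ∈ Ioo a b, f x < h x) :
    ∫ x in a..b, f x < ∫ x in a..b, h x := by
  have hpos := intervalIntegral_pos_of_pos_on (hh.sub hf) (fun x hx => sub_pos.2 (hlt x hx)) hab
  rw [integral_sub hh hf] at hpos
  linarith

/-- Monotonicity of the contribution `∫ F dy` along arcs above the characteristic
in the region `0 ≤ x ≤ a₁`, `y > 0`, where `F < 0`: the contribution is positive
and strictly decreases as the arc moves outward. -/
theorem lienard_potential_upper_arc (F g : ℝ → ℝ) (a₁ : ℝ) (ha₁ : 0 < a₁)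
    (hg : Continuous g) (hgpos : ∀ x : ℝ, 0 < x → 0 < g x)
    (hF : Continuous F)
    (hFneg : ∀ x : ℝ, 0 < x → x < a₁ → F x < 0)
    (hF0 : F 0 = 0) (hFa₁ : F a₁ = 0)
    (u w : ℝ → ℝ)
    (hu : ∀ x ∈ Set.Icc (0:ℝ) a₁,
      HasDerivWithinAt u (-(g x) / (u x - F x)) (Set.Icc (0:ℝ) a₁) x)
    (hw : ∀ x ∈ Set.Icc (0:ℝ) a₁,
      HasDerivWithinAt w (-(g x) / (w x - F x)) (Set.Icc (0:ℝ) a₁) x)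
    (horder : ∀ x ∈ Set.Icc (0:ℝ) a₁, 0 < u x ∧ u x < w x) :
    (∫ x in (0:ℝ)..a₁, F x * (-(g x) / (u x - F x))) >
      (∫ x in (0:ℝ)..a₁, F x * (-(g x) / (w x - F x))) ∧
    (∫ x in (0:ℝ)..a₁, F x * (-(g x) / (w x - F x))) > 0 := by
  have hFle := nonpos_on_Icc_of_neg_on_Ioo hFneg hF0 hFa₁
  have hFu : ∀ x ∈ Icc 0 a₁, F x < u x := fun x hx => (hFle x hx).trans_lt (horder x hx).1
  have hFw : ∀ x ∈ Icc 0 a₁, F x < w x := fun x hx => (hFu x hx).trans (horder x hx).2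
  have hiu := (hF.continuousOn.mul_neg_div_sub hg.continuousOn
    (fun x hx => (hu x hx).continuousWithinAt) hFu).intervalIntegrable_of_Icc
    (μ := volume) ha₁.le
  have hiw := (hF.continuousOn.mul_neg_div_sub hg.continuousOn
    (fun x hx => (hw x hx).continuousWithinAt) hFw).intervalIntegrable_of_Icc
    (μ := volume) ha₁.le
  refine ⟨integral_lt_integral_of_lt_on_Ioo ha₁ hiw hiu fun x hx => ?_,
    intervalIntegral_pos_of_pos_on hiw (fun x hx => ?_) ha₁⟩
  · exact mul_neg_div_sub_lt_of_lt (hFneg x hx.1 hx.2) (hgpos x hx.1)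
      (hFu x (Ioo_subset_Icc_self hx)) (horder x (Ioo_subset_Icc_self hx)).2
  · exact mul_neg_div_sub_pos (hFneg x hx.1 hx.2) (hgpos x hx.1) (hFw x (Ioo_subset_Icc_self hx))
end

section
/- Let F, g : ℝ → ℝ be continuous with g(x) > 0 for x > 0, and suppose F(x) ≤ 0 and F is monotone nonincreasing for x ≥ a₂, where a₂ > 0. Let t ↦ (x(t), y(t)) be a solution of the Lienard system on [t₀, t₁] with x(t) ≥ a₂ for all t ∈ [t₀, t₁]. Suppose s > a₂ and there are times t₀ ≤ t_P < t_{P'} ≤ t₁ with x(t_P) = x(t_{P'}) = s and x(t) ≥ s for all t ∈ [t_P, t_{P'}]. Then the line integral V = ∫ F dy along the arc, i.e. V = −∫_{t₀}^{t₁} F(x(t)) g(x(t)) dt, satisfies V ≥ (−F(s)) · (y(t_P) − y(t_{P'})) ≥ 0. In particular, if −F(s) > 0 and the vertical extent y(t_P) − y(t_{P'}) of the portion of the arc to the right of the line x = s tends to infinity as the arc recedes to infinity, then V → +∞. -/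
/-!
On `[t₀, t₁]` the integrand `-F(x) g(x)` is nonnegative, so `V` is at least its integral over
`[t_P, t_P']`. There `x ≥ s`, hence `-F(x) ≥ -F(s) ≥ 0`, and `∫ g(x) dt = y(t_P) - y(t_P')`
because `y' = -g(x)`.
-/

open Set MeasureTheory

theorem intervalIntegral.integral_eq_sub_of_hasDerivWithinAt_Icc {E : Type*}
    [NormedAddCommGroup E] [NormedSpace ℝ E] [CompleteSpace E] {f f' : ℝ → E} {a b : ℝ}
    (hab : a ≤ b)
    (hf : ∀ t ∈ Icc a b, HasDerivWithinAt f (f' t) (Icc a b) t)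
    (hint : IntervalIntegrable f' volume a b) :
    ∫ t in a..b, f' t = f b - f a :=
  integral_eq_sub_of_hasDerivAt_of_le hab (fun t ht => (hf t ht).continuousWithinAt)
    (fun t ht => (hf t (Ioo_subset_Icc_self ht)).hasDerivAt (Icc_mem_nhds ht.1 ht.2)) hint

theorem integral_comp_eq_sub_of_hasDerivWithinAt_neg {g x y : ℝ → ℝ} {a b : ℝ} (hab : a ≤ b)
    (hg : Continuous g) (hx : ContinuousOn x (Icc a b))
    (hy : ∀ t ∈ Icc a b, HasDerivWithinAt y (-g (x t)) (Icc a b) t) :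
    ∫ t in a..b, g (x t) = y a - y b := by
  have hint : IntervalIntegrable (fun t => g (x t)) volume a b :=
    (hg.comp_continuousOn hx).intervalIntegrable_of_Icc hab
  rw [← neg_sub, ← intervalIntegral.integral_eq_sub_of_hasDerivWithinAt_Icc hab hy hint.neg,
    intervalIntegral.integral_neg, neg_neg]

theorem lienard_potential_outer_arc_lower_bound_general (F g : ℝ → ℝ) (a₂ : ℝ)
    (ha₂ : 0 < a₂)
    (hF : Continuous F) (hg : Continuous g)
    (hgpos : ∀ x : ℝ, 0 < x → 0 < g x)
    (hFnonpos : ∀ x : ℝ, a₂ ≤ x → F x ≤ 0)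
    (hFanti : AntitoneOn F (Set.Ici a₂))
    (t₀ t₁ : ℝ) (x y : ℝ → ℝ)
    (hx : ∀ t ∈ Set.Icc t₀ t₁, HasDerivWithinAt x (y t - F (x t)) (Set.Icc t₀ t₁) t)
    (hy : ∀ t ∈ Set.Icc t₀ t₁, HasDerivWithinAt y (-(g (x t))) (Set.Icc t₀ t₁) t)
    (hxge : ∀ t ∈ Set.Icc t₀ t₁, a₂ ≤ x t)
    (s : ℝ) (hs : a₂ < s) (tP tP' : ℝ)
    (h₁ : t₀ ≤ tP) (h₂ : tP < tP') (h₃ : tP' ≤ t₁)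
    (hxs : ∀ t ∈ Set.Icc tP tP', s ≤ x t) :
    (-∫ t in t₀..t₁, F (x t) * g (x t)) ≥ (-F s) * (y tP - y tP') ∧
      (-F s) * (y tP - y tP') ≥ 0 := by
  have hsub : Icc tP tP' ⊆ Icc t₀ t₁ := Icc_subset_Icc h₁ h₃
  have hxc : ContinuousOn x (Icc t₀ t₁) := fun t ht => (hx t ht).continuousWithinAt
  have hgx : ∀ t ∈ Icc t₀ t₁, 0 ≤ g (x t) := fun t ht => (hgpos _ (ha₂.trans_le (hxge t ht))).le
  have hdrop : ∫ t in tP..tP', g (x t) = y tP - y tP' :=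
    integral_comp_eq_sub_of_hasDerivWithinAt_neg h₂.le hg (hxc.mono hsub)
      fun t ht => (hy t (hsub ht)).mono hsub
  have hcont : ContinuousOn (fun t => -(F (x t) * g (x t))) (Icc t₀ t₁) :=
    ((hF.comp_continuousOn hxc).mul (hg.comp_continuousOn hxc)).neg
  have hnonneg : ∀ t ∈ Icc t₀ t₁, 0 ≤ -(F (x t) * g (x t)) := fun t ht =>
    neg_nonneg.2 (mul_nonpos_of_nonpos_of_nonneg (hFnonpos _ (hxge t ht)) (hgx t ht))
  have hpointwise : ∀ t ∈ Icc tP tP', -F s * g (x t) ≤ -(F (x t) * g (x t)) := fun t ht => by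
    rw [← neg_mul]
    exact mul_le_mul_of_nonneg_right
      (neg_le_neg (hFanti hs.le (hs.le.trans (hxs t ht)) (hxs t ht))) (hgx t (hsub ht))
  refine ⟨?_, mul_nonneg (neg_nonneg.2 (hFnonpos s hs.le)) ?_⟩
  · calc -F s * (y tP - y tP') = ∫ t in tP..tP', -F s * g (x t) := by
          rw [intervalIntegral.integral_const_mul, hdrop]
      _ ≤ ∫ t in tP..tP', -(F (x t) * g (x t)) :=
          intervalIntegral.integral_mono_on h₂.le
            (((hg.comp_continuousOn (hxc.mono hsub)).intervalIntegrable_of_Icc h₂.le).const_mul _)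
            ((hcont.mono hsub).intervalIntegrable_of_Icc h₂.le) hpointwise
      _ ≤ ∫ t in t₀..t₁, -(F (x t) * g (x t)) :=
          intervalIntegral.integral_mono_interval h₁ h₂.le h₃
            (ae_restrict_of_forall_mem measurableSet_Ioc fun t ht =>
              hnonneg t (Ioc_subset_Icc_self ht))
            (hcont.intervalIntegrable_of_Icc (h₁.trans (h₂.le.trans h₃)))
      _ = -∫ t in t₀..t₁, F (x t) * g (x t) := intervalIntegral.integral_neg
  · exact hdrop ▸ intervalIntegral.integral_nonneg h₂.le fun t ht => hgx t (hsub ht)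

/-- Along a solution arc lying in the region `x ≥ a₂` where `F ≤ 0` is monotone
nonincreasing, the line integral `V = ∫ F dy = -∫ F(x(t)) g(x(t)) dt` is at least
`(-F s) · (y(t_P) - y(t_P'))`, which is nonnegative, where the arc is to the right
of the line `x = s` between times `t_P` and `t_P'`. -/
theorem lienard_potential_outer_arc_lower_bound (F g : ℝ → ℝ) (a₂ : ℝ)
    (ha₂ : 0 < a₂)
    (hF : Continuous F) (hg : Continuous g)
    (hgpos : ∀ x : ℝ, 0 < x → 0 < g x)
    (hFnonpos : ∀ x : ℝ, a₂ ≤ x → F x ≤ 0)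
    (hFanti : AntitoneOn F (Set.Ici a₂))
    (t₀ t₁ : ℝ) (ht : t₀ ≤ t₁) (x y : ℝ → ℝ)
    (hx : ∀ t ∈ Set.Icc t₀ t₁, HasDerivWithinAt x (y t - F (x t)) (Set.Icc t₀ t₁) t)
    (hy : ∀ t ∈ Set.Icc t₀ t₁, HasDerivWithinAt y (-(g (x t))) (Set.Icc t₀ t₁) t)
    (hxge : ∀ t ∈ Set.Icc t₀ t₁, a₂ ≤ x t)
    (s : ℝ) (hs : a₂ < s) (tP tP' : ℝ)
    (h₁ : t₀ ≤ tP) (h₂ : tP < tP') (h₃ : tP' ≤ t₁)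
    (hxP : x tP = s) (hxP' : x tP' = s)
    (hxs : ∀ t ∈ Set.Icc tP tP', s ≤ x t) :
    (-∫ t in t₀..t₁, F (x t) * g (x t)) ≥ (-F s) * (y tP - y tP') ∧
      (-F s) * (y tP - y tP') ≥ 0 :=
  lienard_potential_outer_arc_lower_bound_general F g a₂ ha₂ hF hg hgpos hFnonpos hFanti t₀ t₁ x y
    hx hy hxge s hs tP tP' h₁ h₂ h₃ hxs
end
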